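/- arXiv:1906.00206 — 3 statements merged into one kernel-verified Lean document; each statement's English description precedes it below -/
import Mathlib

section
/- Let d ∈ {1,2,3} and let Γ ⊂ ℝ^d be a locally finite discrete set. Suppose there exist R₀ > 0 and M > 0 such that #(Γ ∩ B_{R₀}(x)) ≤ M for every x ∈ ℝ^d. Then there exists R > 0 (one may take R = R₀/(2M)) such that every connected component of the R-neighborhood (Γ)_R = ⋃_{γ∈Γ} B_R(γ) is a bounded subset of ℝ^d. -/
/-!
Let `C` be a connected set inside the `R`-neighbourhood of `Γ`, and `γ₀ ∈ Γ` within `R` of a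
point of `C`. If `C` were unbounded, the continuous function `dist · γ₀` would take every value
`2Ri + R` (`i ∈ ℕ`) on `C`, and each such point of `C` is within `R` of a point of `Γ` whose
distance to `γ₀` lies in the shell `(2Ri, 2R(i+1))`. The points obtained for `i < M` lie in
disjoint shells, hence are distinct, and together with `γ₀` they are `M + 1` points of `Γ` in the
ball of radius `2RM` around `γ₀`.
-/

open Set Metric Bornology

variable {α : Type*} [PseudoMetricSpace α]

lemma IsPreconnected.exists_dist_eq_of_not_isBounded {C : Set α} (hC : IsPreconnected C)
    (hCb : ¬IsBounded C) {x z : α} (hx : x ∈ C) {t : ℝ} (ht : dist x z ≤ t) :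
    ∃ y ∈ C, dist y z = t := by
  obtain ⟨y, hy, hty⟩ : ∃ y ∈ C, t ≤ dist y z := by
    by_contra! hlt
    exact hCb ((isBounded_iff_subset_closedBall z).2 ⟨t, fun y hy => (hlt y hy).le⟩)
  exact hC.intermediate_value hx hy (continuous_id.dist continuous_const).continuousOn ⟨ht, hty⟩

lemma injective_of_dist_mem_Ioo {f : ℕ → α} {z : α} {a : ℝ}
    (hf : ∀ i : ℕ, dist (f i) z ∈ Ioo (a * i) (a * (i + 1))) : Function.Injective f := by
  intro i j hij
  have hi := hf i
  have hj := hf j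
  rw [hij] at hi
  have ha : 0 < a := by nlinarith [hi.1, hi.2]
  have hij₁ : (i : ℝ) < j + 1 := by nlinarith [hi.1, hj.2]
  have hij₂ : (j : ℝ) < i + 1 := by nlinarith [hi.2, hj.1]
  have : i < j + 1 := by exact_mod_cast hij₁
  have : j < i + 1 := by exact_mod_cast hij₂
  omega

lemma add_one_le_encard_inter_ball {Γ : Set α} {z : α} (hz : z ∈ Γ) {a : ℝ} {f : ℕ → α}
    (hfΓ : ∀ i, f i ∈ Γ) (hf : ∀ i : ℕ, dist (f i) z ∈ Ioo (a * i) (a * (i + 1))) {n : ℕ}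
    (hn : n ≠ 0) : (n + 1 : ℕ∞) ≤ (Γ ∩ ball z (a * n)).encard := by
  classical
  have ha : 0 < a := by nlinarith [(hf 0).1, (hf 0).2]
  have hz_notMem : z ∉ (Finset.range n).image f := by
    simp only [Finset.mem_image, not_exists, not_and]
    intro i _ hfi
    have := (hf i).1
    rw [hfi, dist_self] at this
    nlinarith [(Nat.cast_nonneg i : (0 : ℝ) ≤ i)]
  have hsub : (↑(insert z ((Finset.range n).image f)) : Set α) ⊆ Γ ∩ ball z (a * n) := by
    intro y hy
    simp only [Finset.coe_insert, Finset.coe_image, Finset.coe_range, mem_insert_iff,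
      mem_image, mem_Iio] at hy
    rcases hy with rfl | ⟨i, hi, rfl⟩
    · exact ⟨hz, mem_ball_self (by positivity)⟩
    · refine ⟨hfΓ i, mem_ball.2 ((hf i).2.trans_le ?_)⟩
      gcongr
      exact_mod_cast hi
  calc (n + 1 : ℕ∞)
      = ((insert z ((Finset.range n).image f)).card : ℕ∞) := by
        rw [Finset.card_insert_of_notMem hz_notMem,
          Finset.card_image_of_injective _ (injective_of_dist_mem_Ioo hf), Finset.card_range]
        push_cast; rfl
    _ ≤ (Γ ∩ ball z (a * n)).encard := by
        rw [← encard_coe_eq_coe_finsetCard]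
        exact encard_le_encard hsub

theorem IsPreconnected.isBounded_of_forall_exists_dist_lt {Γ C : Set α} {R : ℝ} {M : ℕ}
    (hM : M ≠ 0) (hcount : ∀ z, (Γ ∩ ball z (2 * R * M)).encard ≤ M) (hC : IsPreconnected C)
    (hCΓ : ∀ y ∈ C, ∃ γ ∈ Γ, dist y γ < R) : IsBounded C := by
  by_contra hCb
  obtain ⟨x, hx⟩ : C.Nonempty := nonempty_of_not_isBounded hCb
  obtain ⟨γ₀, hγ₀, hxγ₀⟩ := hCΓ x hx
  have shell : ∀ i : ℕ, ∃ γ ∈ Γ, dist γ γ₀ ∈ Ioo (2 * R * i) (2 * R * (i + 1)) := by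
    intro i
    have hR : 0 ≤ R := dist_nonneg.trans hxγ₀.le
    obtain ⟨y, hy, hyγ₀⟩ := hC.exists_dist_eq_of_not_isBounded hCb hx
      (t := 2 * R * i + R) (by nlinarith [(Nat.cast_nonneg i : (0 : ℝ) ≤ i)])
    obtain ⟨γ, hγ, hyγ⟩ := hCΓ y hy
    refine ⟨γ, hγ, ?_, ?_⟩
    · linarith [dist_triangle y γ γ₀, dist_comm y γ]
    · linarith [dist_triangle γ y γ₀, dist_comm y γ]
  choose γ hγΓ hγ using shell
  have := (add_one_le_encard_inter_ball hγ₀ hγΓ hγ hM).trans (hcount γ₀)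
  exact (ENat.lt_add_one_iff (ENat.natCast_ne_top M)).2 le_rfl |>.not_ge this

theorem uniformly_bounded_counts_implies_bounded_components_general
    (d : ℕ)
    (Γ : Set (EuclideanSpace ℝ (Fin d)))
    (R₀ : ℝ) (hR₀ : 0 < R₀) (M : ℕ) (hM : 0 < M)
    (hcount : ∀ x : EuclideanSpace ℝ (Fin d), (Γ ∩ ball x R₀).Finite ∧
      (Γ ∩ ball x R₀).ncard ≤ M) :
    ∃ R : ℝ, 0 < R ∧ R = R₀ / (2 * M) ∧
      ∀ x ∈ {y : EuclideanSpace ℝ (Fin d) | ∃ γ ∈ Γ, dist y γ < R},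
        Bornology.IsBounded
          (connectedComponentIn {y : EuclideanSpace ℝ (Fin d) | ∃ γ ∈ Γ, dist y γ < R} x) := by
  refine ⟨_, by positivity, rfl, fun x _ => ?_⟩
  refine isPreconnected_connectedComponentIn.isBounded_of_forall_exists_dist_lt hM.ne'
    (fun z => ?_) fun y hy => connectedComponentIn_subset _ x hy
  have hradius : 2 * (R₀ / (2 * M)) * M = R₀ := by field_simp
  rw [hradius, ← (hcount z).1.cast_ncard_eq]
  exact_mod_cast (hcount z).2

/-- If `Γ ⊂ ℝ^d` (`d = 1,2,3`, locally finite) has at most `M` points in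
every ball of radius `R₀`, then there is `R > 0` (one may take `R = R₀/(2M)`) such that
every connected component of the `R`-neighborhood `(Γ)_R = {x | dist x Γ < R}` is bounded. -/
theorem uniformly_bounded_counts_implies_bounded_components
    (d : ℕ) (hd : d = 1 ∨ d = 2 ∨ d = 3)
    (Γ : Set (EuclideanSpace ℝ (Fin d)))
    (hloc : ∀ K : Set (EuclideanSpace ℝ (Fin d)), IsCompact K → (Γ ∩ K).Finite)
    (R₀ : ℝ) (hR₀ : 0 < R₀) (M : ℕ) (hM : 0 < M)
    (hcount : ∀ x : EuclideanSpace ℝ (Fin d), (Γ ∩ ball x R₀).Finite ∧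
      (Γ ∩ ball x R₀).ncard ≤ M) :
    ∃ R : ℝ, 0 < R ∧ R = R₀ / (2 * M) ∧
      ∀ x ∈ {y : EuclideanSpace ℝ (Fin d) | ∃ γ ∈ Γ, dist y γ < R},
        Bornology.IsBounded
          (connectedComponentIn {y : EuclideanSpace ℝ (Fin d) | ∃ γ ∈ Γ, dist y γ < R} x) :=
  uniformly_bounded_counts_implies_bounded_components_general d Γ R₀ hR₀ M hM hcount
end

section
/- Fix α < 0 and L > 0. Consider the equations (A): −2s/α = 1 + e^{−sL} and (B): −2s/α = 1 − e^{−sL} for s > 0. Then (A) has exactly one positive solution s₁(L) for every L > 0, while (B) has no positive solution when L ≤ −2/α and exactly one positive solution s₂(L) when L > −2/α. Moreover s₁ is continuous and strictly decreasing in L with lim_{L→0⁺} s₁(L) = −α and lim_{L→∞} s₁(L) = −α/2; and s₂ is continuous and strictly increasing with lim_{L→(−2/α)⁺} s₂(L) = 0 and lim_{L→∞} s₂(L) = −α/2. -/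
open Set Filter Topology

/-!
Put `c = -2/α > 0`. For fixed `L`, (A) and (B) are the positive zeros of
`s ↦ 1 ± e^{-sL} - c s`. The `+` function is strictly decreasing from the value `2`, so it has
exactly one positive zero. The `-` function is strictly concave, vanishes at `0` and has slope
`L - c` there: it has a positive zero exactly when `L > c`, and any positive zero is the unique
point where it changes sign on `(0, ∞)`.

Everything about the zero `s(L)` is then read off from signs at fixed test points `s > 0`: the
sign of `1 ± e^{-sL} - c s` decides whether `s < s(L)` or `s > s(L)`, it depends continuously on
`L`, and it moves monotonically with `L`. Hence `s(L)` is continuous and monotone, and along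
`L → 0⁺`, `L → c⁺`, `L → ∞` it tends to the sign-change point of the limiting function
`2 - c s`, `1 - e^{-sc} - c s` (negative for all `s > 0`, so the point is `0`), `1 - c s`.
-/

def ChangesSignDownAt (f : ℝ → ℝ) (r : ℝ) : Prop :=
  ∀ s, 0 < s → (0 < f s ↔ s < r) ∧ (f s < 0 ↔ r < s)

namespace ChangesSignDownAt

variable {f : ℝ → ℝ} {r s : ℝ}

theorem apply_eq_zero (h : ChangesSignDownAt f r) (hr : 0 < r) : f r = 0 := by
  obtain ⟨hpos, hneg⟩ := h r hr
  simp only [lt_self_iff_false, iff_false, not_lt] at hpos hneg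
  exact le_antisymm hpos hneg

theorem eq_of_apply_eq_zero (h : ChangesSignDownAt f r) (hs : 0 < s) (hfs : f s = 0) : s = r := by
  obtain ⟨hpos, hneg⟩ := h s hs
  simp only [hfs, lt_self_iff_false, false_iff, not_lt] at hpos hneg
  exact le_antisymm hneg hpos

theorem existsUnique (h : ChangesSignDownAt f r) (hr : 0 < r) : ∃! s, 0 < s ∧ f s = 0 :=
  ⟨r, ⟨hr, h.apply_eq_zero hr⟩, fun _ ⟨hs, hfs⟩ ↦ h.eq_of_apply_eq_zero hs hfs⟩

end ChangesSignDownAt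

section

variable {f : ℝ → ℝ} {r : ℝ}

theorem StrictAntiOn.changesSignDownAt (hf : StrictAntiOn f (Ioi 0)) (hr : 0 < r)
    (hfr : f r = 0) : ChangesSignDownAt f r := fun s hs ↦ by
  rw [← hfr]
  exact ⟨hf.lt_iff_gt hr hs, hf.lt_iff_gt hs hr⟩

theorem StrictConcaveOn.changesSignDownAt (hf : StrictConcaveOn ℝ (Ici 0) f) (h0 : f 0 = 0)
    (hr : 0 < r) (hfr : f r = 0) : ChangesSignDownAt f r := by
  have hslope : StrictAntiOn (fun s ↦ f s / s) (Ioi 0) := fun x hx y hy hxy ↦ by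
    simpa [h0] using hf.secant_strict_mono self_mem_Ici (Ioi_subset_Ici_self hx)
      (Ioi_subset_Ici_self hy) hx.ne' hy.ne' hxy
  intro s hs
  simpa only [div_pos_iff_of_pos_right hs, div_lt_iff₀ hs, zero_mul] using
    hslope.changesSignDownAt hr (by simp [hfr]) s hs

theorem exists_pos_apply_pos_of_hasDerivAt {f' : ℝ} (hf : HasDerivAt f f' 0) (h0 : f 0 = 0)
    (hf' : 0 < f') : ∃ s, 0 < s ∧ 0 < f s := by
  obtain ⟨s, hslope, hs⟩ :=
    ((hf.tendsto_slope_zero_right.eventually (lt_mem_nhds hf')).and self_mem_nhdsWithin).exists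
  refine ⟨s, hs, ?_⟩
  simpa [h0, hs] using hslope

end

theorem tendsto_of_changesSignDownAt {ι : Type*} {l : Filter ι} {g : ι → ℝ → ℝ} {g₀ : ℝ → ℝ}
    {r : ι → ℝ} {r₀ : ℝ} (hg : ∀ s, 0 < s → Tendsto (fun i ↦ g i s) l (𝓝 (g₀ s)))
    (hr₀ : 0 ≤ r₀) (h₀ : ChangesSignDownAt g₀ r₀)
    (hr : ∀ᶠ i in l, 0 < r i ∧ ChangesSignDownAt (g i) (r i)) : Tendsto r l (𝓝 r₀) := by
  refine tendsto_order.2 ⟨fun a ha ↦ ?_, fun b hb ↦ ?_⟩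
  · rcases le_or_gt a 0 with ha0 | ha0
    · exact hr.mono fun i hi ↦ ha0.trans_lt hi.1
    · filter_upwards [(hg a ha0).eventually (lt_mem_nhds ((h₀ a ha0).1.2 ha)), hr]
        with i hgi hi
      exact (hi.2 a ha0).1.1 hgi
  · have hb0 : 0 < b := hr₀.trans_lt hb
    filter_upwards [(hg b hb0).eventually (gt_mem_nhds ((h₀ b hb0).2.2 hb)), hr]
      with i hgi hi
    exact (hi.2 b hb0).2.1 hgi

section

variable {ι : Type*} [Preorder ι] {g : ι → ℝ → ℝ} {r : ι → ℝ} {U : Set ι}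

theorem strictAntiOn_of_changesSignDownAt (hg : ∀ s, 0 < s → StrictAntiOn (fun i ↦ g i s) U)
    (hr : ∀ i ∈ U, 0 < r i ∧ ChangesSignDownAt (g i) (r i)) : StrictAntiOn r U := by
  intro a ha b hb hab
  obtain ⟨hra, hsa⟩ := hr a ha
  exact ((hr b hb).2 (r a) hra).2.1
    ((hg (r a) hra ha hb hab).trans_eq (hsa.apply_eq_zero hra))

theorem strictMonoOn_of_changesSignDownAt (hg : ∀ s, 0 < s → StrictMonoOn (fun i ↦ g i s) U)
    (hr : ∀ i ∈ U, 0 < r i ∧ ChangesSignDownAt (g i) (r i)) : StrictMonoOn r U := by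
  intro a ha b hb hab
  obtain ⟨hra, hsa⟩ := hr a ha
  exact ((hr b hb).2 (r a) hra).1.1
    ((hsa.apply_eq_zero hra).symm.trans_lt (hg (r a) hra ha hb hab))

end

theorem changesSignDownAt_one_sub_mul {c : ℝ} (hc : 0 < c) :
    ChangesSignDownAt (fun s ↦ 1 - c * s) (1 / c) := fun s _ ↦ by
  simp only [sub_pos, sub_neg, lt_div_iff₀ hc, div_lt_iff₀ hc, mul_comm, and_self]

theorem tendsto_exp_neg_mul_atTop {s : ℝ} (hs : 0 < s) :
    Tendsto (fun L ↦ Real.exp (-s * L)) atTop (𝓝 0) :=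
  Real.tendsto_exp_atBot.comp (tendsto_id.const_mul_atTop_of_neg (neg_neg_of_pos hs))

-- With `c = -2/α`, a positive zero `s` gives the eigenvalue `-s²` coming from the matrix eigenvalue
-- `1 + e^{-sL}`, eigenvector `(1, 1)` (even state), resp. `1 - e^{-sL}`, eigenvector `(1, -1)`.
noncomputable def evenSecular (c L s : ℝ) : ℝ := 1 + Real.exp (-s * L) - c * s

noncomputable def oddSecular (c L s : ℝ) : ℝ := 1 - Real.exp (-s * L) - c * s

section

variable {c L r s : ℝ}

theorem strictAnti_evenSecular (hc : 0 < c) (hL : 0 ≤ L) : StrictAnti (evenSecular c L) :=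
  fun a b hab ↦ by
    have : Real.exp (-b * L) ≤ Real.exp (-a * L) := Real.exp_le_exp.2 (by nlinarith)
    simp only [evenSecular]
    nlinarith

theorem changesSignDownAt_evenSecular (hc : 0 < c) (hL : 0 ≤ L) (hr : 0 < r)
    (h : evenSecular c L r = 0) : ChangesSignDownAt (evenSecular c L) r :=
  ((strictAnti_evenSecular hc hL).strictAntiOn _).changesSignDownAt hr h

theorem evenSecular_zero_two_div (hc : c ≠ 0) : evenSecular c 0 (2 / c) = 0 := by
  norm_num [evenSecular, mul_div_cancel₀ _ hc]

theorem exists_evenSecular_eq_zero (hc : 0 < c) (hL : 0 ≤ L) :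
    ∃ r, 0 < r ∧ evenSecular c L r = 0 := by
  have hcont : ContinuousOn (evenSecular c L) (Icc 0 (2 / c)) := by
    unfold evenSecular; fun_prop
  have h0 : evenSecular c L 0 = 2 := by norm_num [evenSecular]
  have hend : evenSecular c L (2 / c) ≤ 0 := by
    have : Real.exp (-(2 / c) * L) ≤ 1 :=
      Real.exp_le_one_iff.2 (by rw [neg_mul]; exact neg_nonpos.2 (by positivity))
    simp only [evenSecular, mul_div_cancel₀ _ hc.ne']
    linarith
  obtain ⟨r, hr, hr0⟩ :=
    intermediate_value_Icc' (by positivity) hcont ⟨hend, by rw [h0]; norm_num⟩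
  refine ⟨r, hr.1.lt_of_ne ?_, hr0⟩
  rintro rfl
  norm_num [h0] at hr0

theorem continuous_evenSecular (c s : ℝ) : Continuous fun L ↦ evenSecular c L s := by
  unfold evenSecular; fun_prop

theorem strictAnti_evenSecular_of_pos (hs : 0 < s) : StrictAnti fun L ↦ evenSecular c L s :=
  fun a b hab ↦ by
    have : Real.exp (-s * b) < Real.exp (-s * a) := Real.exp_lt_exp.2 (by nlinarith)
    simp only [evenSecular]
    linarith

theorem tendsto_evenSecular_atTop (hs : 0 < s) :
    Tendsto (fun L ↦ evenSecular c L s) atTop (𝓝 (1 - c * s)) := by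
  simpa [evenSecular] using ((tendsto_exp_neg_mul_atTop hs).const_add 1).sub_const (c * s)

theorem oddSecular_zero : oddSecular c L 0 = 0 := by
  simp [oddSecular]

theorem strictConcaveOn_oddSecular (hL : L ≠ 0) : StrictConcaveOn ℝ univ (oddSecular c L) := by
  refine ⟨convex_univ, fun x _ y _ hxy a b ha hb hab ↦ ?_⟩
  have hne : -x * L ≠ -y * L := fun h ↦ hxy (by simpa [hL] using h)
  have hexp := strictConvexOn_exp.2 (mem_univ _) (mem_univ _) hne ha hb hab
  have harg : -(a * x + b * y) * L = a * (-x * L) + b * (-y * L) := by ring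
  simp only [oddSecular, smul_eq_mul, harg] at hexp ⊢
  linear_combination hexp + hab

theorem hasDerivAt_oddSecular_zero : HasDerivAt (oddSecular c L) (L - c) 0 := by
  have h : HasDerivAt (fun s ↦ 1 - Real.exp (-s * L) - c * s)
      (-(Real.exp (-0 * L) * (-1 * L)) - c * 1) 0 :=
    ((((hasDerivAt_id' 0).neg.mul_const L).exp).const_sub 1).sub ((hasDerivAt_id' 0).const_mul c)
  exact h.congr_deriv (by simp)

theorem changesSignDownAt_oddSecular (hL : 0 < L) (hr : 0 < r) (h : oddSecular c L r = 0) :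
    ChangesSignDownAt (oddSecular c L) r :=
  ((strictConcaveOn_oddSecular hL.ne').subset (subset_univ _) (convex_Ici 0)).changesSignDownAt
    oddSecular_zero hr h

theorem oddSecular_neg (hL : 0 < L) (hLc : L ≤ c) (hs : 0 < s) : oddSecular c L s < 0 := by
  have := Real.one_sub_lt_exp_neg (mul_pos hs hL).ne'
  rw [← neg_mul] at this
  simp only [oddSecular]
  nlinarith

theorem changesSignDownAt_oddSecular_zero (hL : 0 < L) (hLc : L ≤ c) :
    ChangesSignDownAt (oddSecular c L) 0 := fun _ hs ↦
  have hneg := oddSecular_neg hL hLc hs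
  ⟨iff_of_false hneg.asymm hs.asymm, iff_of_true hneg hs⟩

theorem exists_oddSecular_eq_zero (hc : 0 < c) (hcL : c < L) :
    ∃ r, 0 < r ∧ oddSecular c L r = 0 := by
  obtain ⟨s₀, hs₀, hpos⟩ := exists_pos_apply_pos_of_hasDerivAt hasDerivAt_oddSecular_zero
    oddSecular_zero (sub_pos.2 hcL)
  have hcont : ContinuousOn (oddSecular c L) (Icc s₀ (s₀ + 1 / c)) := by
    unfold oddSecular; fun_prop
  have hend : oddSecular c L (s₀ + 1 / c) ≤ 0 := by
    have := Real.exp_pos (-(s₀ + 1 / c) * L)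
    simp only [oddSecular, mul_add, mul_one_div_cancel hc.ne']
    nlinarith
  obtain ⟨r, hr, hr0⟩ :=
    intermediate_value_Icc' (le_add_of_nonneg_right (by positivity)) hcont ⟨hend, hpos.le⟩
  exact ⟨r, hs₀.trans_le hr.1, hr0⟩

theorem continuous_oddSecular (c s : ℝ) : Continuous fun L ↦ oddSecular c L s := by
  unfold oddSecular; fun_prop

theorem strictMono_oddSecular_of_pos (hs : 0 < s) : StrictMono fun L ↦ oddSecular c L s :=
  fun a b hab ↦ by
    have : Real.exp (-s * b) < Real.exp (-s * a) := Real.exp_lt_exp.2 (by nlinarith)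
    simp only [oddSecular]
    linarith

theorem tendsto_oddSecular_atTop (hs : 0 < s) :
    Tendsto (fun L ↦ oddSecular c L s) atTop (𝓝 (1 - c * s)) := by
  simpa [oddSecular] using ((tendsto_exp_neg_mul_atTop hs).const_sub 1).sub_const (c * s)

theorem existsUnique_evenSecular_eq_zero (hc : 0 < c) (hL : 0 ≤ L) :
    ∃! s, 0 < s ∧ evenSecular c L s = 0 := by
  obtain ⟨r, hr, hr0⟩ := exists_evenSecular_eq_zero hc hL
  exact (changesSignDownAt_evenSecular hc hL hr hr0).existsUnique hr

theorem existsUnique_oddSecular_eq_zero (hc : 0 < c) (hcL : c < L) :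
    ∃! s, 0 < s ∧ oddSecular c L s = 0 := by
  obtain ⟨r, hr, hr0⟩ := exists_oddSecular_eq_zero hc hcL
  exact (changesSignDownAt_oddSecular (hc.trans hcL) hr hr0).existsUnique hr

theorem not_exists_oddSecular_eq_zero (hL : 0 < L) (hLc : L ≤ c) :
    ¬ ∃ s, 0 < s ∧ oddSecular c L s = 0 := fun ⟨_, hs, hs0⟩ ↦
  hs.ne' ((changesSignDownAt_oddSecular_zero hL hLc).eq_of_apply_eq_zero hs hs0)

end

section

variable {c : ℝ} {s₁ : ℝ → ℝ}

theorem changesSignDownAt_evenSecular_root (hc : 0 < c)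
    (hs₁ : ∀ L ∈ Ioi 0, 0 < s₁ L ∧ evenSecular c L (s₁ L) = 0) :
    ∀ L ∈ Ioi 0, 0 < s₁ L ∧ ChangesSignDownAt (evenSecular c L) (s₁ L) := fun L hL ↦
  ⟨(hs₁ L hL).1, changesSignDownAt_evenSecular hc (le_of_lt hL) (hs₁ L hL).1 (hs₁ L hL).2⟩

theorem continuousOn_evenSecular_root (hc : 0 < c)
    (hs₁ : ∀ L ∈ Ioi 0, 0 < s₁ L ∧ evenSecular c L (s₁ L) = 0) : ContinuousOn s₁ (Ioi 0) :=
  fun L hL ↦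
    have H := changesSignDownAt_evenSecular_root hc hs₁
    tendsto_of_changesSignDownAt (fun s _ ↦ (continuous_evenSecular c s).continuousWithinAt)
      (H L hL).1.le (H L hL).2 (eventually_nhdsWithin_of_forall H)

theorem strictAntiOn_evenSecular_root (hc : 0 < c)
    (hs₁ : ∀ L ∈ Ioi 0, 0 < s₁ L ∧ evenSecular c L (s₁ L) = 0) : StrictAntiOn s₁ (Ioi 0) :=
  strictAntiOn_of_changesSignDownAt
    (fun _ hs ↦ (strictAnti_evenSecular_of_pos hs).strictAntiOn _)
    (changesSignDownAt_evenSecular_root hc hs₁)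

theorem tendsto_evenSecular_root_nhdsGT_zero (hc : 0 < c)
    (hs₁ : ∀ L ∈ Ioi 0, 0 < s₁ L ∧ evenSecular c L (s₁ L) = 0) :
    Tendsto s₁ (𝓝[>] 0) (𝓝 (2 / c)) :=
  tendsto_of_changesSignDownAt (fun s _ ↦ (continuous_evenSecular c s).continuousWithinAt)
    (by positivity)
    (changesSignDownAt_evenSecular hc le_rfl (by positivity) (evenSecular_zero_two_div hc.ne'))
    (eventually_nhdsWithin_of_forall (changesSignDownAt_evenSecular_root hc hs₁))

theorem tendsto_evenSecular_root_atTop (hc : 0 < c)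
    (hs₁ : ∀ L ∈ Ioi 0, 0 < s₁ L ∧ evenSecular c L (s₁ L) = 0) :
    Tendsto s₁ atTop (𝓝 (1 / c)) :=
  tendsto_of_changesSignDownAt (fun _ hs ↦ tendsto_evenSecular_atTop hs) (by positivity)
    (changesSignDownAt_one_sub_mul hc)
    ((eventually_gt_atTop 0).mono (changesSignDownAt_evenSecular_root hc hs₁))

end

section

variable {c : ℝ} {s₂ : ℝ → ℝ}

theorem changesSignDownAt_oddSecular_root (hc : 0 < c)
    (hs₂ : ∀ L ∈ Ioi c, 0 < s₂ L ∧ oddSecular c L (s₂ L) = 0) :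
    ∀ L ∈ Ioi c, 0 < s₂ L ∧ ChangesSignDownAt (oddSecular c L) (s₂ L) := fun L hL ↦
  ⟨(hs₂ L hL).1, changesSignDownAt_oddSecular (hc.trans hL) (hs₂ L hL).1 (hs₂ L hL).2⟩

theorem continuousOn_oddSecular_root (hc : 0 < c)
    (hs₂ : ∀ L ∈ Ioi c, 0 < s₂ L ∧ oddSecular c L (s₂ L) = 0) : ContinuousOn s₂ (Ioi c) :=
  fun L hL ↦
    have H := changesSignDownAt_oddSecular_root hc hs₂
    tendsto_of_changesSignDownAt (fun s _ ↦ (continuous_oddSecular c s).continuousWithinAt)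
      (H L hL).1.le (H L hL).2 (eventually_nhdsWithin_of_forall H)

theorem strictMonoOn_oddSecular_root (hc : 0 < c)
    (hs₂ : ∀ L ∈ Ioi c, 0 < s₂ L ∧ oddSecular c L (s₂ L) = 0) : StrictMonoOn s₂ (Ioi c) :=
  strictMonoOn_of_changesSignDownAt
    (fun _ hs ↦ (strictMono_oddSecular_of_pos hs).strictMonoOn _)
    (changesSignDownAt_oddSecular_root hc hs₂)

theorem tendsto_oddSecular_root_nhdsGT (hc : 0 < c)
    (hs₂ : ∀ L ∈ Ioi c, 0 < s₂ L ∧ oddSecular c L (s₂ L) = 0) :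
    Tendsto s₂ (𝓝[>] c) (𝓝 0) :=
  tendsto_of_changesSignDownAt (fun s _ ↦ (continuous_oddSecular c s).continuousWithinAt)
    le_rfl (changesSignDownAt_oddSecular_zero hc le_rfl)
    (eventually_nhdsWithin_of_forall (changesSignDownAt_oddSecular_root hc hs₂))

theorem tendsto_oddSecular_root_atTop (hc : 0 < c)
    (hs₂ : ∀ L ∈ Ioi c, 0 < s₂ L ∧ oddSecular c L (s₂ L) = 0) :
    Tendsto s₂ atTop (𝓝 (1 / c)) :=
  tendsto_of_changesSignDownAt (fun _ hs ↦ tendsto_oddSecular_atTop hs) (by positivity)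
    (changesSignDownAt_one_sub_mul hc)
    ((eventually_gt_atTop c).mono (changesSignDownAt_oddSecular_root hc hs₂))

end

/-- two attractive δ-interactions in 1D. For `α < 0`, the equation
`−2s/α = 1 + e^{−sL}` has exactly one positive solution `s₁(L)` for every `L > 0`, and
`−2s/α = 1 − e^{−sL}` has no positive solution for `L ≤ −2/α` and exactly one positive
solution `s₂(L)` for `L > −2/α`; `s₁` is continuous strictly decreasing with limits `−α`
(at `0⁺`) and `−α/2` (at `∞`), and `s₂` is continuous strictly increasing with limits `0`
(at `(−2/α)⁺`) and `−α/2` (at `∞`). -/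
theorem two_delta_eigenvalue_equations_dim1 (α : ℝ) (hα : α < 0) :
    (∀ L : ℝ, 0 < L → ∃! s : ℝ, 0 < s ∧ -2 * s / α = 1 + Real.exp (-s * L)) ∧
    (∀ L : ℝ, 0 < L → L ≤ -2 / α →
      ¬ ∃ s : ℝ, 0 < s ∧ -2 * s / α = 1 - Real.exp (-s * L)) ∧
    (∀ L : ℝ, -2 / α < L → ∃! s : ℝ, 0 < s ∧ -2 * s / α = 1 - Real.exp (-s * L)) ∧
    (∀ s₁ : ℝ → ℝ,
      (∀ L : ℝ, 0 < L → 0 < s₁ L ∧ -2 * s₁ L / α = 1 + Real.exp (-(s₁ L) * L)) →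
      ContinuousOn s₁ (Ioi 0) ∧ StrictAntiOn s₁ (Ioi 0) ∧
      Tendsto s₁ (nhdsWithin 0 (Ioi 0)) (nhds (-α)) ∧
      Tendsto s₁ atTop (nhds (-α / 2))) ∧
    (∀ s₂ : ℝ → ℝ,
      (∀ L : ℝ, -2 / α < L → 0 < s₂ L ∧ -2 * s₂ L / α = 1 - Real.exp (-(s₂ L) * L)) →
      ContinuousOn s₂ (Ioi (-2 / α)) ∧ StrictMonoOn s₂ (Ioi (-2 / α)) ∧
      Tendsto s₂ (nhdsWithin (-2 / α) (Ioi (-2 / α))) (nhds 0) ∧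
      Tendsto s₂ atTop (nhds (-α / 2))) := by
  set c := -2 / α with hc_def
  have hc : 0 < c := div_pos_of_neg_of_neg (by norm_num) hα
  have hA (L s : ℝ) : -2 * s / α = 1 + Real.exp (-s * L) ↔ evenSecular c L s = 0 := by
    rw [evenSecular, sub_eq_zero, eq_comm, mul_div_right_comm]
  have hB (L s : ℝ) : -2 * s / α = 1 - Real.exp (-s * L) ↔ oddSecular c L s = 0 := by
    rw [oddSecular, sub_eq_zero, eq_comm, mul_div_right_comm]
  have h1c : -α / 2 = 1 / c := by rw [hc_def]; field_simp
  have h2c : -α = 2 / c := by rw [hc_def]; field_simp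
  rw [h1c, h2c]
  simp only [hA, hB]
  refine ⟨fun L hL ↦ existsUnique_evenSecular_eq_zero hc hL.le,
    fun L hL hLc ↦ not_exists_oddSecular_eq_zero hL hLc,
    fun L hL ↦ existsUnique_oddSecular_eq_zero hc hL, fun s₁ hs₁ ↦ ?_, fun s₂ hs₂ ↦ ?_⟩
  · exact ⟨continuousOn_evenSecular_root hc hs₁, strictAntiOn_evenSecular_root hc hs₁,
      tendsto_evenSecular_root_nhdsGT_zero hc hs₁, tendsto_evenSecular_root_atTop hc hs₁⟩
  · exact ⟨continuousOn_oddSecular_root hc hs₂, strictMonoOn_oddSecular_root hc hs₂,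
      tendsto_oddSecular_root_nhdsGT hc hs₂, tendsto_oddSecular_root_atTop hc hs₂⟩
end

section
/- Fix α ∈ ℝ and L > 0 and consider the equations (A): 4πα + s = e^{−sL}/L and (B): 4πα + s = −e^{−sL}/L for s > 0. If α ≥ 0, then (A) has no positive solution for L ≥ 1/(4πα) and exactly one positive solution s₁(L) for 0 < L < 1/(4πα), with s₁(L) → ∞ as L → 0⁺ and s₁(L) → 0 as L → 1/(4πα)⁻; and (B) has no positive solution. If α < 0, then (A) has exactly one positive solution s₁(L) for every L > 0, with s₁(L) → ∞ as L → 0⁺ and s₁(L) → −4πα as L → ∞; and (B) has no positive solution for L ≤ 1/(−4πα) and exactly one positive solution s₂(L) for L > 1/(−4πα), with s₂(L) → 0 as L → (1/(−4πα))⁺ and s₂(L) → −4πα as L → ∞. -/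
open Set Filter Topology Real

/-!
Write `c = 4πα` and `x = sL > 0`. The elementary inequalities `0 < e^{-x} < 1` and
`1 - x < e^{-x}` bound a root of (A) by `max (-c) ((1/L - c)/2) < s < 1/L - c`, and a root of
(B) by `-c - 1/L < s < -c`; they also force `c < 1/L` in case (A) and `c + 1/L < 0` in case (B).
Conversely, under these conditions a root exists by the intermediate value theorem, and it is
unique because `s ↦ c + s ∓ e^{-sL}/L` is strictly increasing on `[0, ∞)` (for the lower sign
since `x ↦ x + e^{-x}` is). Every limit except that of `s₂` at the threshold `L₀ = 1/(-c)` is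
a squeeze between these bounds. At the threshold, `sL` solves `x + e^{-x} = -cL`, whose right
side tends to `1`, the value of the strictly increasing function `x ↦ x + e^{-x}` at `x = 0`.
-/

/-- `det M` factors as `(α + s/(4π) - e^{-sL}/(4πL)) (α + s/(4π) + e^{-sL}/(4πL))`; with
`c = 4πα` the first factor vanishes for the bound state symmetric under exchange of the two
centres, the second for the antisymmetric one. -/
def IsSymmetricRoot (c L s : ℝ) : Prop := 0 < s ∧ c + s = exp (-s * L) / L

def IsAntisymmetricRoot (c L s : ℝ) : Prop := 0 < s ∧ c + s = -(exp (-s * L) / L)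

lemma strictMonoOn_add_exp_neg : StrictMonoOn (fun x : ℝ => x + exp (-x)) (Ici 0) := by
  intro a ha b _ hab
  have hba : 1 - exp (-(b - a)) < b - a := by linarith [one_sub_lt_exp_neg (sub_pos.2 hab).ne']
  have hpos : 0 ≤ 1 - exp (-(b - a)) :=
    sub_nonneg.2 (exp_le_one_iff.2 (neg_nonpos.2 (sub_pos.2 hab).le))
  have hexp_a : exp (-a) ≤ 1 := exp_le_one_iff.2 (neg_nonpos.2 ha)
  have : exp (-a) * (1 - exp (-(b - a))) < b - a :=
    lt_of_le_of_lt (mul_le_of_le_one_left hpos hexp_a) hba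
  have hexp_b : exp (-b) = exp (-a) * exp (-(b - a)) := by rw [← exp_add]; ring_nf
  show a + exp (-a) < b + exp (-b)
  rw [hexp_b]
  linarith

lemma existsUnique_pos_eq_zero {f : ℝ → ℝ} {b : ℝ} (hb : 0 ≤ b)
    (hf : ContinuousOn f (Icc 0 b)) (hmono : StrictMonoOn f (Ici 0)) (h0 : f 0 < 0)
    (hfb : 0 ≤ f b) :
    ∃! s, 0 < s ∧ f s = 0 := by
  obtain ⟨s, ⟨hs0, -⟩, hfs⟩ := intermediate_value_Icc hb hf ⟨h0.le, hfb⟩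
  have hs : 0 < s := lt_of_le_of_ne hs0 (by rintro rfl; exact h0.ne hfs)
  exact ⟨s, ⟨hs, hfs⟩, fun t ⟨ht, hft⟩ => hmono.injOn ht.le hs.le (hft.trans hfs.symm)⟩

section

variable {c L s : ℝ}

namespace IsSymmetricRoot

lemma neg_lt (h : IsSymmetricRoot c L s) (hL : 0 < L) : -c < s := by
  linarith [h.2, div_pos (exp_pos (-s * L)) hL]

lemma lt_inv_sub (h : IsSymmetricRoot c L s) (hL : 0 < L) : s < L⁻¹ - c := by
  have : exp (-s * L) < 1 := exp_lt_one_iff.2 (by nlinarith [h.1])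
  have : exp (-s * L) / L < L⁻¹ := by rw [← one_div]; exact div_lt_div_of_pos_right this hL
  linarith [h.2]

lemma inv_sub_div_two_lt (h : IsSymmetricRoot c L s) (hL : 0 < L) : (L⁻¹ - c) / 2 < s := by
  have : 1 - s * L < exp (-s * L) := by
    rw [neg_mul]; exact one_sub_lt_exp_neg (mul_pos h.1 hL).ne'
  have : L⁻¹ - s < exp (-s * L) / L := by
    rw [lt_div_iff₀ hL, sub_mul, inv_mul_cancel₀ hL.ne']; exact this
  linarith [h.2]

end IsSymmetricRoot

namespace IsAntisymmetricRoot

lemma lt_neg (h : IsAntisymmetricRoot c L s) (hL : 0 < L) : s < -c := by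
  linarith [h.2, div_pos (exp_pos (-s * L)) hL]

lemma neg_sub_inv_lt (h : IsAntisymmetricRoot c L s) (hL : 0 < L) : -c - L⁻¹ < s := by
  have : exp (-s * L) < 1 := exp_lt_one_iff.2 (by nlinarith [h.1])
  have : exp (-s * L) / L < L⁻¹ := by rw [← one_div]; exact div_lt_div_of_pos_right this hL
  linarith [h.2]

lemma mul_add_exp_neg_eq (h : IsAntisymmetricRoot c L s) (hL : 0 < L) :
    s * L + exp (-(s * L)) = -c * L := by
  have := h.2
  field_simp at this
  linarith

lemma add_inv_neg (h : IsAntisymmetricRoot c L s) (hL : 0 < L) : c + L⁻¹ < 0 := by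
  have := strictMonoOn_add_exp_neg self_mem_Ici (mul_pos h.1 hL).le (mul_pos h.1 hL)
  simp only [neg_zero, exp_zero, zero_add, h.mul_add_exp_neg_eq hL] at this
  have : 1 / L < -c := by rwa [div_lt_iff₀ hL]
  rw [one_div] at this
  linarith

end IsAntisymmetricRoot

end

section

variable {c L : ℝ}

lemma existsUnique_isSymmetricRoot (hL : 0 < L) (hc : c < L⁻¹) :
    ∃! s, IsSymmetricRoot c L s := by
  have hmono : StrictMono fun s => c + s - exp (-s * L) / L := fun a b hab => by
    have : exp (-b * L) < exp (-a * L) := exp_lt_exp.2 (by nlinarith)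
    have := div_lt_div_of_pos_right this hL
    simp only
    linarith
  have hb : exp (-(L⁻¹ - c) * L) / L ≤ 1 / L :=
    div_le_div_of_nonneg_right
      (exp_le_one_iff.2 (mul_nonpos_of_nonpos_of_nonneg (by linarith) hL.le)) hL.le
  rw [one_div] at hb
  have := existsUnique_pos_eq_zero (sub_pos.2 hc).le (by fun_prop) (hmono.strictMonoOn _)
    (by simpa using hc) (by linarith)
  exact (existsUnique_congr fun s => and_congr_right' sub_eq_zero.symm).2 this

lemma existsUnique_isAntisymmetricRoot (hL : 0 < L) (hc : c + L⁻¹ < 0) :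
    ∃! s, IsAntisymmetricRoot c L s := by
  have hmono : StrictMonoOn (fun s => c + s + exp (-s * L) / L) (Ici 0) := by
    intro a ha b hb hab
    have := strictMonoOn_add_exp_neg (mul_nonneg ha hL.le) (mul_nonneg hb hL.le)
      (mul_lt_mul_of_pos_right hab hL)
    have := div_lt_div_of_pos_right this hL
    simp only [add_div, mul_div_cancel_right₀ _ hL.ne', neg_mul] at this ⊢
    linarith
  have := existsUnique_pos_eq_zero (b := -c) (by linarith [inv_pos.2 hL]) (by fun_prop) hmono
    (by simpa using hc) (by linarith [div_pos (exp_pos (-(-c) * L)) hL])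
  exact (existsUnique_congr fun s => and_congr_right' eq_neg_iff_add_eq_zero).2 this

end

section

variable {c : ℝ} {s : ℝ → ℝ}

lemma tendsto_atTop_of_isSymmetricRoot (hs : ∀ᶠ L in 𝓝[>] 0, IsSymmetricRoot c L (s L)) :
    Tendsto s (𝓝[>] 0) atTop := by
  have hlow : Tendsto (fun L : ℝ => (L⁻¹ - c) / 2) (𝓝[>] 0) atTop := by
    simpa only [sub_eq_add_neg] using
      (tendsto_inv_nhdsGT_zero.atTop_add tendsto_const_nhds).atTop_div_const two_pos
  refine tendsto_atTop_mono' _ ?_ hlow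
  filter_upwards [hs, self_mem_nhdsWithin] with L h hL
  exact (h.inv_sub_div_two_lt hL).le

lemma tendsto_zero_of_isSymmetricRoot (hc : 0 < c)
    (hs : ∀ᶠ L in 𝓝[<] c⁻¹, IsSymmetricRoot c L (s L)) :
    Tendsto s (𝓝[<] c⁻¹) (𝓝 0) := by
  have hup : Tendsto (fun L : ℝ => L⁻¹ - c) (𝓝[<] c⁻¹) (𝓝 0) := by
    have := (tendsto_inv₀ (inv_ne_zero hc.ne')).sub_const c
    rw [inv_inv, sub_self] at this
    exact this.mono_left nhdsWithin_le_nhds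
  have hpos : ∀ᶠ L in 𝓝[<] c⁻¹, 0 < L :=
    nhdsWithin_le_nhds (eventually_gt_nhds (inv_pos.2 hc))
  refine tendsto_of_tendsto_of_tendsto_of_le_of_le' tendsto_const_nhds hup ?_ ?_
  · filter_upwards [hs] with L h using h.1.le
  · filter_upwards [hs, hpos] with L h hL using (h.lt_inv_sub hL).le

lemma tendsto_of_isSymmetricRoot_atTop (hs : ∀ᶠ L in atTop, IsSymmetricRoot c L (s L)) :
    Tendsto s atTop (𝓝 (-c)) := by
  have hup : Tendsto (fun L : ℝ => L⁻¹ - c) atTop (𝓝 (-c)) := by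
    simpa only [zero_sub] using tendsto_inv_atTop_zero.sub_const c
  refine tendsto_of_tendsto_of_tendsto_of_le_of_le' tendsto_const_nhds hup ?_ ?_
  · filter_upwards [hs, eventually_gt_atTop 0] with L h hL using (h.neg_lt hL).le
  · filter_upwards [hs, eventually_gt_atTop 0] with L h hL using (h.lt_inv_sub hL).le

lemma tendsto_of_isAntisymmetricRoot_atTop
    (hs : ∀ᶠ L in atTop, IsAntisymmetricRoot c L (s L)) :
    Tendsto s atTop (𝓝 (-c)) := by
  have hlow : Tendsto (fun L : ℝ => -c - L⁻¹) atTop (𝓝 (-c)) := by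
    simpa only [sub_zero] using tendsto_inv_atTop_zero.const_sub (-c)
  refine tendsto_of_tendsto_of_tendsto_of_le_of_le' hlow tendsto_const_nhds ?_ ?_
  · filter_upwards [hs, eventually_gt_atTop 0] with L h hL using (h.neg_sub_inv_lt hL).le
  · filter_upwards [hs, eventually_gt_atTop 0] with L h hL using (h.lt_neg hL).le

lemma tendsto_zero_of_isAntisymmetricRoot (hc : c < 0)
    (hs : ∀ᶠ L in 𝓝[>] (-c)⁻¹, IsAntisymmetricRoot c L (s L)) :
    Tendsto s (𝓝[>] (-c)⁻¹) (𝓝 0) := by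
  set L₀ := (-c)⁻¹
  have hL₀ : 0 < L₀ := inv_pos.2 (neg_pos.2 hc)
  refine tendsto_order.2 ⟨fun b hb => hs.mono fun L h => hb.trans h.1, fun ε hε => ?_⟩
  have hgap : -c * L₀ < ε * L₀ + exp (-(ε * L₀)) := by
    have := strictMonoOn_add_exp_neg self_mem_Ici (mul_pos hε hL₀).le (mul_pos hε hL₀)
    simp only [neg_zero, exp_zero, zero_add] at this
    rwa [mul_inv_cancel₀ (neg_ne_zero.2 hc.ne)]
  have hnear : ∀ᶠ L in 𝓝[>] L₀, -c * L < ε * L₀ + exp (-(ε * L₀)) :=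
    nhdsWithin_le_nhds <|
      ((continuous_const_mul (-c)).tendsto L₀).eventually (eventually_lt_nhds hgap)
  filter_upwards [hs, hnear, self_mem_nhdsWithin] with L h hnearL (hL : L₀ < L)
  have hL : 0 < L := hL₀.trans hL
  by_contra! hεs
  have hx : ε * L₀ ≤ s L * L := by nlinarith
  have := (strictMonoOn_add_exp_neg.le_iff_le (mul_pos hε hL₀).le (mul_pos h.1 hL).le).2 hx
  linarith [h.mul_add_exp_neg_eq hL]

end

/-- two point interactions in 3D: eigenvalue equations
`4πα + s = ±e^{−sL}/L`. -/
theorem two_delta_eigenvalue_equations_dim3 (α : ℝ) :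
    (0 ≤ α →
      (0 < α → ∀ L : ℝ, 1 / (4 * π * α) ≤ L →
        ¬ ∃ s : ℝ, 0 < s ∧ 4 * π * α + s = Real.exp (-s * L) / L) ∧
      (∀ L : ℝ, 0 < L → (α = 0 ∨ L < 1 / (4 * π * α)) →
        ∃! s : ℝ, 0 < s ∧ 4 * π * α + s = Real.exp (-s * L) / L) ∧
      (∀ s₁ : ℝ → ℝ,
        (∀ L : ℝ, 0 < L → (α = 0 ∨ L < 1 / (4 * π * α)) →
          0 < s₁ L ∧ 4 * π * α + s₁ L = Real.exp (-(s₁ L) * L) / L) →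
        Tendsto s₁ (nhdsWithin 0 (Ioi 0)) atTop ∧
        (0 < α → Tendsto s₁
          (nhdsWithin (1 / (4 * π * α)) (Iio (1 / (4 * π * α)))) (nhds 0))) ∧
      (∀ L : ℝ, 0 < L → ¬ ∃ s : ℝ, 0 < s ∧
        4 * π * α + s = -(Real.exp (-s * L) / L))) ∧
    (α < 0 →
      (∀ L : ℝ, 0 < L →
        ∃! s : ℝ, 0 < s ∧ 4 * π * α + s = Real.exp (-s * L) / L) ∧
      (∀ s₁ : ℝ → ℝ,
        (∀ L : ℝ, 0 < L →
          0 < s₁ L ∧ 4 * π * α + s₁ L = Real.exp (-(s₁ L) * L) / L) →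
        Tendsto s₁ (nhdsWithin 0 (Ioi 0)) atTop ∧
        Tendsto s₁ atTop (nhds (-(4 * π * α)))) ∧
      (∀ L : ℝ, 0 < L → L ≤ 1 / (-(4 * π * α)) →
        ¬ ∃ s : ℝ, 0 < s ∧ 4 * π * α + s = -(Real.exp (-s * L) / L)) ∧
      (∀ L : ℝ, 1 / (-(4 * π * α)) < L →
        ∃! s : ℝ, 0 < s ∧ 4 * π * α + s = -(Real.exp (-s * L) / L)) ∧
      (∀ s₂ : ℝ → ℝ,
        (∀ L : ℝ, 1 / (-(4 * π * α)) < L →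
          0 < s₂ L ∧ 4 * π * α + s₂ L = -(Real.exp (-(s₂ L) * L) / L)) →
        Tendsto s₂ (nhdsWithin (1 / (-(4 * π * α)))
          (Ioi (1 / (-(4 * π * α))))) (nhds 0) ∧
        Tendsto s₂ atTop (nhds (-(4 * π * α))))) := by
  simp only [one_div]
  set c := 4 * π * α
  refine ⟨fun hα => ?_, fun hα => ?_⟩
  · have below_threshold : ∀ L, 0 < L → (α = 0 ∨ L < c⁻¹) → c < L⁻¹ := by
      rintro L hL (rfl | hLc)
      · simpa [c] using hL
      · rcases hα.eq_or_lt with rfl | hα'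
        · simp only [c, mul_zero, inv_zero] at hLc
          linarith
        · exact (lt_inv_comm₀ hL (by positivity)).1 hLc
    refine ⟨fun hα' L hL ⟨s, h⟩ => ?_, fun L hL hLc => existsUnique_isSymmetricRoot hL
      (below_threshold L hL hLc), fun s₁ hs₁ => ⟨?_, fun hα' => ?_⟩,
      fun L hL ⟨s, h⟩ => ?_⟩
    · have hc : 0 < c := by positivity
      have hL0 : 0 < L := (inv_pos.2 hc).trans_le hL
      linarith [(inv_le_comm₀ hc hL0).1 hL, IsSymmetricRoot.lt_inv_sub h hL0, h.1]
    · refine tendsto_atTop_of_isSymmetricRoot (c := c) ?_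
      have hsmall : ∀ᶠ L in 𝓝[>] 0, α = 0 ∨ L < c⁻¹ := by
        rcases hα.eq_or_lt with rfl | hα'
        · exact .of_forall fun _ => .inl rfl
        · exact nhdsWithin_le_nhds ((eventually_lt_nhds (by positivity)).mono fun _ => .inr)
      filter_upwards [self_mem_nhdsWithin, hsmall] with L hL hLc using hs₁ L hL hLc
    · have hc : 0 < c := by positivity
      refine tendsto_zero_of_isSymmetricRoot hc ?_
      filter_upwards [self_mem_nhdsWithin,
        nhdsWithin_le_nhds (eventually_gt_nhds (inv_pos.2 hc))] with L hLc hL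
      exact hs₁ L hL (.inr hLc)
    · have : 0 ≤ c := by positivity
      linarith [IsAntisymmetricRoot.add_inv_neg h hL, inv_pos.2 hL]
  · have hc : c < 0 := mul_neg_of_pos_of_neg (by positivity) hα
    refine ⟨fun L hL => existsUnique_isSymmetricRoot hL (hc.trans (inv_pos.2 hL)),
      fun s₁ hs₁ => ⟨?_, ?_⟩, fun L hL hLc ⟨s, h⟩ => ?_, fun L hLc => ?_,
      fun s₂ hs₂ => ⟨?_, ?_⟩⟩
    · exact tendsto_atTop_of_isSymmetricRoot (eventually_mem_nhdsWithin.mono hs₁)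
    · exact tendsto_of_isSymmetricRoot_atTop ((eventually_gt_atTop 0).mono hs₁)
    · linarith [IsAntisymmetricRoot.add_inv_neg h hL,
        (le_inv_comm₀ hL (neg_pos.2 hc)).1 hLc]
    · have hL : 0 < L := (inv_pos.2 (neg_pos.2 hc)).trans hLc
      exact existsUnique_isAntisymmetricRoot hL
        (by linarith [(inv_lt_comm₀ (neg_pos.2 hc) hL).1 hLc])
    · exact tendsto_zero_of_isAntisymmetricRoot hc (eventually_mem_nhdsWithin.mono hs₂)
    · exact tendsto_of_isAntisymmetricRoot_atTop ((eventually_gt_atTop _).mono hs₂)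
end
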